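/- Every segment s_j contains every vertex whose relative deadline equals (3/2)T, i.e. every clause vertex v^{c_k} and every non-pivot vertex of every consistency gadget LCG_i and RCG_i. -/

import Mathlib

namespace CRUAV

/-! ### Generic single-UAV CR-UAV notions -/

/-- Duration of the subpath of an infinite path `s` between positions `a` and `b`. -/
def dur {V : Type*} (FT : V → V → ℕ) (s : ℕ → V) (a b : ℕ) : ℕ :=
  ∑ i ∈ Finset.Ico a b, FT (s i) (s (i + 1))

/-- `s` is a solution: an infinite path (consecutive vertices distinct) visiting every
vertex infinitely often, in which any subpath joining consecutive occurrences of a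
vertex `v` has duration at most `RD v`. -/
def IsSolution {V : Type*} (RD : V → ℕ) (FT : V → V → ℕ) (s : ℕ → V) : Prop :=
  (∀ n, s n ≠ s (n + 1)) ∧
  (∀ v : V, ∀ N : ℕ, ∃ n, N ≤ n ∧ s n = v) ∧
  (∀ v : V, ∀ a b : ℕ, a < b → s a = v → s b = v →
      (∀ i, a < i → i < b → s i ≠ v) → dur FT s a b ≤ RD v)

/-- The infinite periodic path obtained by repeating the finite word `u` forever. -/
def omegaPath {V : Type*} (u : List V) (d : V) : ℕ → V :=
  fun n => u.getD (n % u.length) d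

/-- Duration of a finite path given as a list of vertices. -/
def durL {V : Type*} (FT : V → V → ℕ) (L : List V) : ℕ :=
  (L.zipWith FT L.tail).sum

/-- The (inclusive) slice of a list between positions `a` and `b`. -/
def slice {V : Type*} (L : List V) (a b : ℕ) : List V := (L.take (b + 1)).drop a

/-- Duration of the subpath of the finite path `L` between positions `a` and `b`. -/
def fragDur {V : Type*} (FT : V → V → ℕ) (d : V) (L : List V) (a b : ℕ) : ℕ :=
  ∑ i ∈ Finset.Ico a b, FT (L.getD i d) (L.getD (i + 1) d)

/-! ### The constructed instance `G` -/

/-- The constant `l = 24h + 34`. -/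
def l (h : ℕ) : ℕ := 24 * h + 34

/-- The constant `T`. -/
def T (m h : ℕ) : ℕ :=
  2 * (m * (2 * (3 * m + 1) * l h + l h) + m * (2 * (3 * m + 2) * l h + l h) + l h + 2 * h)

/-- The vertices of the constructed instance `G`.  Gadgets are indexed by
`g : Fin (2*m)`: gadget `g` with `g < m` belongs to the variable `x_{g+1}^0`, and
gadget `g` with `m ≤ g` to the variable `x_{g-m+1}^1`.  `shared k` is the vertex
`v_{k+1}` shared by consecutive gadgets.  In `side g right pos`, `right = false`
selects the left side `LS` and `right = true` the right side `RS`; `pos` is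
`0` (top), `1` (middle), `2` (bottom).  `row g c pos` is the vertex of the row of
gadget `g` in column `c` (of the `4h+2` columns of the `h` clause boxes alternating
with the `h+1` separator boxes) at height `pos`.  `clauseV k` is the clause vertex of
clause `c_{k+1}`; `pvt i right` is the pivot vertex of `LCG_{i+1}`/`RCG_{i+1}` and
`port i right d` its four surrounding vertices (`d`: `0` = in↓, `1` = out↑,
`2` = in↑, `3` = out↓). -/
inductive Vtx (m h : ℕ) : Type where
  | top : Vtx m h
  | bot : Vtx m h
  | mid : Vtx m h
  | shared (k : Fin (2 * m - 1)) : Vtx m h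
  | side (g : Fin (2 * m)) (right : Bool) (pos : Fin 3) : Vtx m h
  | row (g : Fin (2 * m)) (c : Fin (4 * h + 2)) (pos : Fin 3) : Vtx m h
  | clauseV (k : Fin h) : Vtx m h
  | pvt (i : Fin m) (right : Bool) : Vtx m h
  | port (i : Fin m) (right : Bool) (d : Fin 4) : Vtx m h
  deriving DecidableEq

/-- The vertex at the top of gadget `g`. -/
def topVtx {m h : ℕ} (g : Fin (2 * m)) : Vtx m h :=
  if hg : (g : ℕ) = 0 then .top else .shared ⟨(g : ℕ) - 1, by have := g.isLt; omega⟩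

/-- The vertex at the bottom of gadget `g`. -/
def botVtx {m h : ℕ} (g : Fin (2 * m)) : Vtx m h :=
  if hg : (g : ℕ) = 2 * m - 1 then .bot else .shared ⟨(g : ℕ), by have := g.isLt; omega⟩

/-- Flight time of the two long edges at the top of gadget `g`. -/
def longTop (m h : ℕ) (g : Fin (2 * m)) : ℕ :=
  if (g : ℕ) < m then (3 * m + 1) * l h else (3 * m + 2) * l h

/-- Flight time of the two long edges at the bottom of gadget `g`
(the bottom long edges of the gadget of `x_m^0` already have flight time `(3m+2)l`). -/
def longBot (m h : ℕ) (g : Fin (2 * m)) : ℕ :=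
  if (g : ℕ) + 1 < m then (3 * m + 1) * l h else (3 * m + 2) * l h

/-- The edges of `G`, listed in one direction, with their flight times.
`occurs k g = some true` (resp. `some false`) means that the variable of gadget `g`
occurs positively (resp. negatively) in the clause `c_{k+1}`. -/
def adjFT (m h : ℕ) (occurs : Fin h → Fin (2 * m) → Option Bool) :
    Vtx m h → Vtx m h → Option ℕ
  -- long edges from the top of the first gadget
  | .top, .side g _ p => if (g : ℕ) = 0 ∧ (p : ℕ) = 0 then some (longTop m h g) else none
  -- long edges into the bottom of the last gadget
  | .bot, .side g _ p => if (g : ℕ) = 2 * m - 1 ∧ (p : ℕ) = 2 then some (longBot m h g) else none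
  -- long edges at shared vertices
  | .shared k, .side g _ p =>
      if (k : ℕ) + 1 = (g : ℕ) ∧ (p : ℕ) = 0 then some (longTop m h g)
      else if (k : ℕ) = (g : ℕ) ∧ (p : ℕ) = 2 then some (longBot m h g)
      else none
  -- vertical edges inside `LS` and `RS`
  | .side g r p, .side g' r' p' =>
      if g = g' ∧ r = r' ∧ (p : ℕ) + 1 = (p' : ℕ) then some 2 else none
  -- vertical edges inside a column of a row, and horizontal edges along the top
  -- and the bottom of a row
  | .row g c p, .row g' c' p' =>
      if g = g' ∧ c = c' ∧ (p : ℕ) + 1 = (p' : ℕ) then some 2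
      else if g = g' ∧ (c : ℕ) + 1 = (c' : ℕ) ∧ p = p' ∧ ((p : ℕ) = 0 ∨ (p : ℕ) = 2) then
        some 2
      else none
  -- the edges at `v_mid`
  | .mid, .top => some (T m h / 4)
  | .mid, .bot => some (T m h / 4)
  -- edges joining a clause vertex to the two bottom (positive occurrence) or the two
  -- top (negative occurrence) corners of the corresponding clause box
  | .clauseV k, .row g c p =>
      if ((c : ℕ) = 4 * (k : ℕ) + 2 ∨ (c : ℕ) = 4 * (k : ℕ) + 3) ∧
          ((occurs k g = some true ∧ (p : ℕ) = 2) ∨ (occurs k g = some false ∧ (p : ℕ) = 0))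
      then some 2 else none
  -- edges inside the consistency gadgets
  | .pvt i r, .port i' r' _ => if i = i' ∧ r = r' then some 2 else none
  -- edges joining the ports of the consistency gadgets to the sides `LS`/`RS`:
  -- in↓ and out↑ serve the gadget of `x_{i+1}^0`, in↑ and out↓ that of `x_{i+1}^1`;
  -- "in" ports attach to the bottom of the side, "out" ports to its top
  | .port i r dd, .side g s p =>
      if s = r ∧
          ((((dd : ℕ) = 0 ∨ (dd : ℕ) = 1) ∧ (g : ℕ) = (i : ℕ)) ∨
            (((dd : ℕ) = 2 ∨ (dd : ℕ) = 3) ∧ (g : ℕ) = (i : ℕ) + m)) ∧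
          ((((dd : ℕ) = 0 ∨ (dd : ℕ) = 2) ∧ (p : ℕ) = 2) ∨
            (((dd : ℕ) = 1 ∨ (dd : ℕ) = 3) ∧ (p : ℕ) = 0))
      then some 2 else none
  -- edges joining the ports of the consistency gadgets to the end columns of the rows
  -- (as in Figure 4 of the paper: on the left, in↓/in↑ attach to the bottom-left and
  -- out↑/out↓ to the top-left row corner; on the right, in↓/in↑ attach to the
  -- top-right and out↑/out↓ to the bottom-right row corner)
  | .port i r dd, .row g c p =>
      if ((r = false ∧ (c : ℕ) = 0) ∨ (r = true ∧ (c : ℕ) = 4 * h + 1)) ∧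
          ((((dd : ℕ) = 0 ∨ (dd : ℕ) = 1) ∧ (g : ℕ) = (i : ℕ)) ∨
            (((dd : ℕ) = 2 ∨ (dd : ℕ) = 3) ∧ (g : ℕ) = (i : ℕ) + m)) ∧
          ((r = false ∧ ((((dd : ℕ) = 0 ∨ (dd : ℕ) = 2) ∧ (p : ℕ) = 2) ∨
              (((dd : ℕ) = 1 ∨ (dd : ℕ) = 3) ∧ (p : ℕ) = 0))) ∨
            (r = true ∧ ((((dd : ℕ) = 0 ∨ (dd : ℕ) = 2) ∧ (p : ℕ) = 0) ∨
              (((dd : ℕ) = 1 ∨ (dd : ℕ) = 3) ∧ (p : ℕ) = 2))))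
      then some 2 else none
  | _, _ => none

/-- The flight times of `G`: the listed edges, symmetrised; all remaining pairs of
distinct vertices are joined by an edge of flight time `2T`. -/
def FT (m h : ℕ) (occurs : Fin h → Fin (2 * m) → Option Bool) (v w : Vtx m h) : ℕ :=
  if v = w then 0
  else
    match adjFT m h occurs v w with
    | some x => x
    | none =>
      match adjFT m h occurs w v with
      | some x => x
      | none => 2 * T m h

/-- The relative deadlines of `G`. -/
def RD (m h : ℕ) : Vtx m h → ℕ
  | .top => T m h
  | .bot => T m h
  | .mid => T m h
  | .shared _ => T m h + 2 * h
  | .side _ _ _ => T m h + l h + 2 * h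
  | .row _ _ _ => T m h + l h + 2 * h
  | .clauseV _ => 3 * T m h / 2
  | .pvt i _ => T m h / 2 + m * (2 * (3 * m + 2) * l h + l h) + 4 * h - (2 * (i : ℕ) + 1) * l h
  | .port _ _ _ => 3 * T m h / 2

/-! ### Periodic solutions split into segments -/

/-- The word `v_mid s₁ v_mid s₂ ⋯ v_mid s_p`. -/
def word {m h p : ℕ} (segs : Fin p → List (Vtx m h)) : List (Vtx m h) :=
  (List.ofFn (fun j => Vtx.mid :: segs j)).flatten

/-- The infinite periodic path `(v_mid s₁ v_mid s₂ ⋯ v_mid s_p)^ω`. -/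
def pathOf {m h p : ℕ} (segs : Fin p → List (Vtx m h)) : ℕ → Vtx m h :=
  omegaPath (word segs) .mid

/-- The special vertices `S ∪ {v_top, v_bot}`. -/
def isSpecial {m h : ℕ} : Vtx m h → Bool
  | .top => true
  | .bot => true
  | .shared _ => true
  | _ => false

/-- A fragment of the segment `L`: a maximal subpath, from position `a` to position
`b`, whose endpoints are distinct special vertices and which contains no other
special vertex. -/
def Fragment {m h : ℕ} (L : List (Vtx m h)) (a b : ℕ) : Prop :=
  a < b ∧ b < L.length ∧
    isSpecial (L.getD a Vtx.mid) = true ∧ isSpecial (L.getD b Vtx.mid) = true ∧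
    L.getD a Vtx.mid ≠ L.getD b Vtx.mid ∧
    ∀ i, a < i → i < b → isSpecial (L.getD i Vtx.mid) = false

/-! ### Clause boxes, traversal patterns, traversal directions -/

/-- The column of the first (`sec = false`) or second (`sec = true`) column of the
`(k+1)`-st clause box. -/
def boxCol {h : ℕ} (k : Fin h) (sec : Bool) : Fin (4 * h + 2) :=
  ⟨4 * (k : ℕ) + 2 + (if sec then 1 else 0), by have := k.isLt; split <;> omega⟩

/-- The vertices of the `(k+1)`-st clause box of gadget `g`. -/
def boxV {m h : ℕ} (g : Fin (2 * m)) (k : Fin h) (sec : Bool) (p : Fin 3) : Vtx m h :=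
  .row g (boxCol k sec) p

/-- Membership in the `(k+1)`-st clause box of gadget `g`. -/
def InClauseBox {m h : ℕ} (g : Fin (2 * m)) (k : Fin h) (v : Vtx m h) : Prop :=
  ∃ sec p, v = boxV g k sec p

/-- The order of the six vertices of a clause box in pattern `⊓`, entered at the
bottom corner of column `flip`. -/
def sqcapSeq {m h : ℕ} (g : Fin (2 * m)) (k : Fin h) (flip : Bool) : List (Vtx m h) :=
  [boxV g k flip 2, boxV g k flip 1, boxV g k flip 0,
   boxV g k (!flip) 0, boxV g k (!flip) 1, boxV g k (!flip) 2]

/-- The order of the six vertices of a clause box in pattern `⊔`, entered at the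
top corner of column `flip`. -/
def sqcupSeq {m h : ℕ} (g : Fin (2 * m)) (k : Fin h) (flip : Bool) : List (Vtx m h) :=
  [boxV g k flip 0, boxV g k flip 1, boxV g k flip 2,
   boxV g k (!flip) 2, boxV g k (!flip) 1, boxV g k (!flip) 0]

/-- `L` traverses the vertices of `seq` in order, consecutively except for possible
detours from a vertex of `seq` to a clause vertex and immediately back. -/
def TraversedIn {m h : ℕ} (L : List (Vtx m h)) (seq : List (Vtx m h)) : Prop :=
  ∃ f : Fin seq.length → ℕ,
    (∀ t, f t < L.length) ∧
    (∀ t, L.getD (f t) Vtx.mid = seq.get t) ∧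
    (∀ (t : ℕ) (ht : t + 1 < seq.length),
      f ⟨t + 1, ht⟩ = f ⟨t, by omega⟩ + 1 ∨
        (f ⟨t + 1, ht⟩ = f ⟨t, by omega⟩ + 2 ∧
          ∃ k', L.getD (f ⟨t, by omega⟩ + 1) Vtx.mid = Vtx.clauseV k'))

/-- The `(k+1)`-st clause box of gadget `g` is traversed in pattern `⊓` by the
segment `L` (each of its vertices being visited exactly once, with possible detours
via clause vertices). -/
def SqcapBox {m h : ℕ} (L : List (Vtx m h)) (g : Fin (2 * m)) (k : Fin h) : Prop :=
  (∀ sec p, L.count (boxV g k sec p) = 1) ∧ ∃ flip, TraversedIn L (sqcapSeq g k flip)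

/-- The `(k+1)`-st clause box of gadget `g` is traversed in pattern `⊔` by the
segment `L`. -/
def SqcupBox {m h : ℕ} (L : List (Vtx m h)) (g : Fin (2 * m)) (k : Fin h) : Prop :=
  (∀ sec p, L.count (boxV g k sec p) = 1) ∧ ∃ flip, TraversedIn L (sqcupSeq g k flip)

/-- The gadget of `x_{i+1}^0`, as an index in `Fin (2*m)`. -/
def g0 {m : ℕ} (i : Fin m) : Fin (2 * m) := ⟨(i : ℕ), by have := i.isLt; omega⟩

/-- The gadget of `x_{i+1}^1`, as an index in `Fin (2*m)`. -/
def g1 {m : ℕ} (i : Fin m) : Fin (2 * m) := ⟨(i : ℕ) + m, by have := i.isLt; omega⟩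

/-- Gadget `g` is traversed in the `true` direction by the segment `L`: the long edges
are used to enter the left side `LS` from the top vertex and to leave from the right
side `RS` to the bottom vertex. -/
def TravTrue {m h : ℕ} (L : List (Vtx m h)) (g : Fin (2 * m)) : Prop :=
  (∃ n, n + 1 < L.length ∧ L.getD n Vtx.mid = topVtx g ∧
      L.getD (n + 1) Vtx.mid = Vtx.side g false 0) ∧
  (∃ n, n + 1 < L.length ∧ L.getD n Vtx.mid = Vtx.side g true 2 ∧
      L.getD (n + 1) Vtx.mid = botVtx g)

/-- Gadget `g` is traversed in the `false` direction by the segment `L`: the long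
edges are used to enter the right side `RS` from the top vertex and to leave from the
left side `LS` to the bottom vertex. -/
def TravFalse {m h : ℕ} (L : List (Vtx m h)) (g : Fin (2 * m)) : Prop :=
  (∃ n, n + 1 < L.length ∧ L.getD n Vtx.mid = topVtx g ∧
      L.getD (n + 1) Vtx.mid = Vtx.side g true 0) ∧
  (∃ n, n + 1 < L.length ∧ L.getD n Vtx.mid = Vtx.side g false 2 ∧
      L.getD (n + 1) Vtx.mid = botVtx g)

/-- Position of the first visit, within the first `m` fragments of the segment `L`
(i.e. at positions preceded by at most `m` occurrences of special vertices), of the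
pivot pair `{pvt_{i+1}^L, pvt_{i+1}^R}`. -/
noncomputable def firstVisitFH (m h : ℕ) (L : List (Vtx m h)) (i : Fin m) : ℕ :=
  sInf {n | n < L.length ∧ (L.take (n + 1)).countP isSpecial ≤ m ∧
    (L.getD n Vtx.mid = Vtx.pvt i false ∨ L.getD n Vtx.mid = Vtx.pvt i true)}

/-- Position of the first visit, within the last `m` fragments of the segment `L`
(i.e. at positions preceded by at least `m+1` occurrences of special vertices), of the
pivot pair `{pvt_{i+1}^L, pvt_{i+1}^R}`. -/
noncomputable def firstVisitSH (m h : ℕ) (L : List (Vtx m h)) (i : Fin m) : ℕ :=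
  sInf {n | n < L.length ∧ m + 1 ≤ (L.take (n + 1)).countP isSpecial ∧
    (L.getD n Vtx.mid = Vtx.pvt i false ∨ L.getD n Vtx.mid = Vtx.pvt i true)}

/-- `φ(j)` is satisfied: every clause is satisfied by the assignment `σ`, where the
variable `x_{i+1}^0` of clause `c_{k+1}` reads `σ j i` and the variable `x_{i+1}^1`
reads `σ (j+1) i`. -/
def SatisfiesAt (m h : ℕ) (occurs : Fin h → Fin (2 * m) → Option Bool)
    (σ : ℕ → Fin m → Bool) (j : ℕ) : Prop :=
  ∀ k : Fin h, ∃ (g : Fin (2 * m)) (b : Bool), occurs k g = some b ∧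
    (if hg : (g : ℕ) < m then σ j ⟨(g : ℕ), hg⟩ = b
     else σ (j + 1) ⟨(g : ℕ) - m, by have := g.isLt; omega⟩ = b)


/-! ### Auxiliary lemmas -/

def Qv (m h : ℕ) : ℕ := (6 * m ^ 2 + 4 * m) * l h + (13 * h + 17)

lemma T_eq_4Q (m h : ℕ) : T m h = 4 * Qv m h := by unfold T Qv l; ring

lemma T_div4 (m h : ℕ) : T m h / 4 = Qv m h := by rw [T_eq_4Q]; omega

lemma T_32 (m h : ℕ) : 3 * T m h / 2 = 6 * Qv m h := by rw [T_eq_4Q]; omega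

lemma Q_ge (m h : ℕ) (hm : 0 < m) : (3 * m + 1) * l h ≤ Qv m h := by
  unfold Qv
  have : (3 * m + 1) * l h ≤ (6 * m ^ 2 + 4 * m) * l h := by
    apply Nat.mul_le_mul_right; nlinarith
  omega

section FTbounds

variable {m h : ℕ} (occurs : Fin h → Fin (2 * m) → Option Bool)

lemma FT_to_mid (hm : 0 < m) (v : Vtx m h) (hv : v ≠ .mid) :
    Qv m h ≤ FT m h occurs v .mid := by
  have h3 : Qv m h ≤ 2 * T m h := by rw [T_eq_4Q]; omega
  have h4 : T m h = 4 * Qv m h := T_eq_4Q m h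
  cases v <;> simp_all [FT, adjFT, T_div4] <;> omega

lemma FT_from_mid (hm : 0 < m) (w : Vtx m h) (hw : w ≠ .mid) :
    Qv m h ≤ FT m h occurs .mid w := by
  have h3 : Qv m h ≤ 2 * T m h := by rw [T_eq_4Q]; omega
  have h4 : T m h = 4 * Qv m h := T_eq_4Q m h
  cases w <;> simp_all [FT, adjFT, T_div4] <;> split_ifs <;>
      simp_all [T_div4] <;>
      first
        | exact h4 _
        | exact h5 _
        | exact h3
        | exact h2
        | exact h1 <;> omega

lemma FT_from_mid_eq (w : Vtx m h) (h1 : w ≠ .top) (h2 : w ≠ .bot) (h3 : w ≠ .mid) :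
    FT m h occurs .mid w = 2 * T m h := by
  cases w <;> simp_all [FT, adjFT]

lemma FT_to_mid_eq (w : Vtx m h) (h1 : w ≠ .top) (h2 : w ≠ .bot) (h3 : w ≠ .mid) :
    FT m h occurs w .mid = 2 * T m h := by
  cases w <;> simp_all [FT, adjFT]

lemma FT_sp_left (hm : 0 < m) (v w : Vtx m h) (hv : isSpecial v = true) (hne : v ≠ w) :
    (3 * m + 1) * l h ≤ FT m h occurs v w := by
  have h1 : (3 * m + 1) * l h ≤ (3 * m + 2) * l h := Nat.mul_le_mul_right _ (by omega)
  have h2 : (3 * m + 1) * l h ≤ Qv m h := Q_ge _ _ hm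
  have h3 : (3 * m + 1) * l h ≤ 2 * T m h := by rw [T_eq_4Q]; omega
  have h4 : ∀ g : Fin (2*m), (3 * m + 1) * l h ≤ longTop m h g := by
    intro g; unfold longTop; split <;> omega
  have h5 : ∀ g : Fin (2*m), (3 * m + 1) * l h ≤ longBot m h g := by
    intro g; unfold longBot; split <;> omega
  cases v <;> simp_all [isSpecial] <;>
    cases w <;> simp_all [FT, adjFT, T_div4] <;> split_ifs <;>
      simp_all [T_div4] <;>
      first
        | exact h4 _
        | exact h5 _
        | exact h3
        | exact h2
        | exact h1

lemma FT_sp_right (hm : 0 < m) (v w : Vtx m h) (hw : isSpecial w = true) (hne : v ≠ w) :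
    (3 * m + 1) * l h ≤ FT m h occurs v w := by
  have h1 : (3 * m + 1) * l h ≤ (3 * m + 2) * l h := Nat.mul_le_mul_right _ (by omega)
  have h2 : (3 * m + 1) * l h ≤ Qv m h := Q_ge _ _ hm
  have h3 : (3 * m + 1) * l h ≤ 2 * T m h := by rw [T_eq_4Q]; omega
  have h4 : ∀ g : Fin (2*m), (3 * m + 1) * l h ≤ longTop m h g := by
    intro g; unfold longTop; split <;> omega
  have h5 : ∀ g : Fin (2*m), (3 * m + 1) * l h ≤ longBot m h g := by
    intro g; unfold longBot; split <;> omega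
  cases w <;> simp_all [isSpecial] <;>
    cases v <;> simp_all [FT, adjFT, T_div4] <;> split_ifs <;>
      simp_all [T_div4] <;>
      first
        | exact h4 _
        | exact h5 _
        | exact h3
        | exact h2
        | exact h1

lemma FT_sp_sp (v w : Vtx m h) (hv : isSpecial v = true) (hw : isSpecial w = true)
    (hne : v ≠ w) : FT m h occurs v w = 2 * T m h := by
  cases v <;> simp_all [isSpecial] <;> cases w <;> simp_all [FT, adjFT]

end FTbounds

section ListAux

variable {V : Type*}

lemma flatten_getD (x : V) :
    ∀ (ls : List (List V)) (k : ℕ), k < ls.length →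
      ∀ d, d < (ls.getD k []).length →
        ls.flatten.getD ((ls.take k).flatten.length + d) x = (ls.getD k []).getD d x := by
  intro ls
  induction ls with
  | nil => simp
  | cons L rest ih =>
      intro k hk d hd
      cases k with
      | zero =>
          simp only [List.getD_cons_zero] at hd ⊢
          simp only [List.take_zero, List.flatten_nil, List.length_nil, Nat.zero_add,
            List.flatten_cons]
          exact List.getD_append _ _ _ _ hd
      | succ k =>
          simp only [List.length_cons, Nat.succ_lt_succ_iff] at hk
          simp only [List.getD_cons_succ] at hd ⊢
          have hlen : ((L :: rest).take (k + 1)).flatten.length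
              = L.length + (rest.take k).flatten.length := by
            simp [List.take_succ_cons]
          rw [hlen, List.flatten_cons, Nat.add_assoc,
            List.getD_append_right _ _ _ _ (Nat.le_add_right _ _), Nat.add_sub_cancel_left]
          exact ih k hk d hd

lemma flatten_pos (x : V) :
    ∀ (ls : List (List V)) (r : ℕ), r < ls.flatten.length →
      ∃ k d, k < ls.length ∧ d < (ls.getD k []).length ∧
        r = (ls.take k).flatten.length + d := by
  intro ls
  induction ls with
  | nil => simp
  | cons L rest ih =>
      intro r hr
      simp only [List.flatten_cons, List.length_append] at hr
      by_cases hL : r < L.length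
      · exact ⟨0, r, by simp, by simpa using hL, by simp⟩
      · obtain ⟨k, d, hk, hd, he⟩ := ih (r - L.length) (by omega)
        refine ⟨k + 1, d, by simpa using hk, by simpa using hd, ?_⟩
        simp only [List.take_succ_cons, List.flatten_cons, List.length_append]
        omega

lemma take_flatten_succ (ls : List (List V)) (k : ℕ) (hk : k < ls.length) :
    (ls.take (k + 1)).flatten.length = (ls.take k).flatten.length + (ls.getD k []).length := by
  rw [List.take_succ, List.flatten_append, List.length_append]
  simp [List.getElem?_eq_getElem hk, List.getD_eq_getElem _ _ hk]

end ListAux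

section SumAux

lemma sum_one (f : ℕ → ℕ) (a b i1 : ℕ) (h0 : a ≤ i1) (h1 : i1 < b) :
    f i1 ≤ ∑ i ∈ Finset.Ico a b, f i :=
  Finset.single_le_sum (fun i _ => Nat.zero_le _) (Finset.mem_Ico.mpr ⟨h0, h1⟩)

lemma sum_two (f : ℕ → ℕ) (a b i1 i2 : ℕ) (h0 : a ≤ i1) (h1 : i1 < i2) (h2 : i2 < b) :
    f i1 + f i2 ≤ ∑ i ∈ Finset.Ico a b, f i := by
  have hsub : ({i1, i2} : Finset ℕ) ⊆ Finset.Ico a b := by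
    intro x hx; simp only [Finset.mem_insert, Finset.mem_singleton] at hx
    rcases hx with rfl | rfl <;> simp [Finset.mem_Ico] <;> omega
  calc f i1 + f i2 = ∑ i ∈ ({i1, i2} : Finset ℕ), f i := by
        rw [Finset.sum_insert (by simp; omega), Finset.sum_singleton]
    _ ≤ _ := Finset.sum_le_sum_of_subset hsub

lemma sum_three (f : ℕ → ℕ) (a b i1 i2 i3 : ℕ)
    (h0 : a ≤ i1) (h1 : i1 < i2) (h2 : i2 < i3) (h3 : i3 < b) :
    f i1 + f i2 + f i3 ≤ ∑ i ∈ Finset.Ico a b, f i := by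
  have hsub : ({i1, i2, i3} : Finset ℕ) ⊆ Finset.Ico a b := by
    intro x hx; simp only [Finset.mem_insert, Finset.mem_singleton] at hx
    rcases hx with rfl | rfl | rfl <;> simp [Finset.mem_Ico] <;> omega
  calc f i1 + f i2 + f i3 = ∑ i ∈ ({i1, i2, i3} : Finset ℕ), f i := by
        rw [Finset.sum_insert (by simp; omega), Finset.sum_insert (by simp; omega),
          Finset.sum_singleton]; ring
    _ ≤ _ := Finset.sum_le_sum_of_subset hsub

lemma sum_six (f : ℕ → ℕ) (a b i1 i2 i3 i4 i5 i6 : ℕ)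
    (h0 : a ≤ i1) (h1 : i1 < i2) (h2 : i2 < i3) (h3 : i3 < i4) (h4 : i4 < i5)
    (h5 : i5 < i6) (h6 : i6 < b) :
    f i1 + f i2 + f i3 + f i4 + f i5 + f i6 ≤ ∑ i ∈ Finset.Ico a b, f i := by
  have e1 : f i1 + f i2 + f i3 ≤ ∑ i ∈ Finset.Ico a i4, f i :=
    sum_three f a i4 i1 i2 i3 h0 h1 h2 h3
  have e2 : f i4 + f i5 + f i6 ≤ ∑ i ∈ Finset.Ico i4 b, f i :=
    sum_three f i4 b i4 i5 i6 le_rfl h4 h5 h6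
  have := Finset.sum_Ico_consecutive f (show a ≤ i4 by omega) (show i4 ≤ b by omega)
  omega

lemma chain_sum (f : ℕ → ℕ) (G : ℕ → Prop) (C : ℕ)
    (hgap : ∀ t t', G t → G t' → t < t' → C ≤ ∑ i ∈ Finset.Ico t t', f i) :
    ∀ (n : ℕ) (P : Finset ℕ), P.card = n → (∀ t ∈ P, G t) → ∀ hne : P.Nonempty,
      (P.card - 1) * C ≤ ∑ i ∈ Finset.Ico (P.min' hne) (P.max' hne), f i := by
  intro n
  induction n with
  | zero => intro P hc hG hne; simp [hc]
  | succ n ih =>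
      intro P hc hG hne
      rcases Nat.eq_zero_or_pos n with rfl | hn
      · simp [hc]
      · have hcard : 1 < P.card := by omega
        have hminmax : P.min' hne < P.max' hne := Finset.min'_lt_max'_of_card P hcard
        set M := P.max' hne with hM
        set P' := P.erase M with hP'
        have hcard' : P'.card = n := by
          rw [hP', Finset.card_erase_of_mem (Finset.max'_mem P hne)]; omega
        have hne' : P'.Nonempty := Finset.card_pos.mp (by omega)
        have hG' : ∀ t ∈ P', G t := fun t ht => hG t (Finset.mem_of_mem_erase ht)
        have hminmem : P.min' hne ∈ P' :=
          Finset.mem_erase.mpr ⟨ne_of_lt hminmax, Finset.min'_mem P hne⟩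
        have hmin' : P'.min' hne' = P.min' hne := by
          apply le_antisymm (Finset.min'_le _ _ hminmem)
          exact Finset.min'_le _ _ (Finset.mem_of_mem_erase (Finset.min'_mem P' hne'))
        have hM'M : P'.max' hne' < M := by
          have h2 := Finset.mem_erase.mp (Finset.max'_mem P' hne')
          exact lt_of_le_of_ne (Finset.le_max' P _ h2.2) h2.1
        have hminM' : P.min' hne ≤ P'.max' hne' := by
          rw [← hmin']; exact Finset.min'_le P' _ (Finset.max'_mem P' hne')
        have e1 := ih P' hcard' hG' hne'
        rw [hmin', hcard'] at e1
        have e2 : C ≤ ∑ i ∈ Finset.Ico (P'.max' hne') M, f i :=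
          hgap _ _ (hG _ (Finset.mem_of_mem_erase (Finset.max'_mem P' hne')))
            (hG _ (Finset.max'_mem P hne)) hM'M
        have e3 := Finset.sum_Ico_consecutive f hminM' (le_of_lt hM'M)
        have : P.card - 1 = (n - 1) + 1 := by omega
        rw [this, Nat.add_mul, Nat.one_mul]
        omega

end SumAux

lemma getD_cons_len {α : Type*} (x d : α) (L : List α) (hL : 0 < L.length) :
    (x :: L).getD L.length d = L.getD (L.length - 1) d := by
  obtain ⟨e, he⟩ : ∃ e, L.length = e + 1 := ⟨L.length - 1, by omega⟩
  rw [he, List.getD_cons_succ, Nat.add_sub_cancel]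

section Blocks

variable {m h p : ℕ} (segs : Fin p → List (Vtx m h))

/-- The list of blocks `mid :: segs j`. -/
def Bls : List (List (Vtx m h)) := List.ofFn (fun j => Vtx.mid :: segs j)

/-- Offset of the `k`-th block inside the word. -/
def off (k : ℕ) : ℕ := ((Bls segs).take k).flatten.length

lemma word_eq_flatten : word segs = (Bls segs).flatten := rfl

lemma Bls_length : (Bls segs).length = p := List.length_ofFn

lemma Bls_getD (j : Fin p) : (Bls segs).getD (j : ℕ) [] = Vtx.mid :: segs j := by
  rw [List.getD_eq_getElem _ _ (by rw [Bls_length]; exact j.isLt)]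
  simp only [Bls, List.getElem_ofFn]

lemma off_zero : off segs 0 = 0 := rfl

lemma off_succF (j : Fin p) : off segs ((j : ℕ) + 1) = off segs (j : ℕ) + (1 + (segs j).length) := by
  unfold off
  rw [take_flatten_succ _ _ (by rw [Bls_length]; exact j.isLt), Bls_getD]
  simp [Nat.add_comm]

lemma off_p : off segs p = (word segs).length := by
  rw [word_eq_flatten]
  unfold off
  have he : (Bls segs).take p = Bls segs :=
    List.take_of_length_le (le_of_eq (Bls_length segs))
  rw [he]

lemma off_mono : ∀ d k, k + d ≤ p → off segs k ≤ off segs (k + d) := by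
  intro d
  induction d with
  | zero => intro k _; exact le_rfl
  | succ d ih =>
      intro k hk
      have h1 := ih k (by omega)
      have h2 : off segs (k + d + 1) = off segs (k + d) + (1 + (segs ⟨k + d, by omega⟩).length) :=
        off_succF segs ⟨k + d, by omega⟩
      show off segs k ≤ off segs (k + d + 1)
      omega

lemma off_le_N (k : ℕ) (hk : k ≤ p) : off segs k ≤ (word segs).length := by
  rw [← off_p]
  have := off_mono segs (p - k) k (by omega)
  rw [show k + (p - k) = p from by omega] at this
  exact this

lemma s_mod (n : ℕ) : pathOf segs (n % (word segs).length) = pathOf segs n := by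
  show (word segs).getD _ _ = (word segs).getD _ _
  rw [Nat.mod_mod_of_dvd _ dvd_rfl]

lemma s_block (c : ℕ) (j : Fin p) (d : ℕ) (hd : d < 1 + (segs j).length) :
    pathOf segs (c * (word segs).length + (off segs (j : ℕ) + d))
      = (Vtx.mid :: segs j).getD d Vtx.mid := by
  have h1 := off_succF segs j
  have h2 := off_le_N segs ((j : ℕ) + 1) j.isLt
  have hlt : off segs (j : ℕ) + d < (word segs).length := by omega
  have hN : 0 < (word segs).length := by omega
  show (word segs).getD ((c * (word segs).length + (off segs (j : ℕ) + d)) % (word segs).length)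
      Vtx.mid = _
  rw [Nat.add_comm, Nat.add_mul_mod_self_right, Nat.mod_eq_of_lt hlt]
  rw [word_eq_flatten]
  have hfl := flatten_getD Vtx.mid (Bls segs) (j : ℕ) (by rw [Bls_length]; exact j.isLt) d
    (by rw [Bls_getD]; simp only [List.length_cons]; omega)
  rw [show ((Bls segs).take (j : ℕ)).flatten.length = off segs (j : ℕ) from rfl] at hfl
  rw [hfl, Bls_getD]

end Blocks

/-- Every segment contains every clause vertex and every non-pivot
vertex of every consistency gadget. -/
theorem segment_contains_deadline_3T2_vertices (m h : ℕ) (hm : 2 < m) (hh : 0 < h)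
    (occurs : Fin h → Fin (2 * m) → Option Bool)
    (p : ℕ) (hp : 0 < p) (segs : Fin p → List (Vtx m h))
    (hne : ∀ j, segs j ≠ [])
    (hmid : ∀ j, Vtx.mid ∉ segs j)
    (hsol : IsSolution (RD m h) (FT m h occurs) (pathOf segs)) :
    ∀ j, (∀ k : Fin h, Vtx.clauseV k ∈ segs j) ∧
      (∀ (i : Fin m) (r : Bool) (d : Fin 4), Vtx.port i r d ∈ segs j) := by
  have hm' : 0 < m := by omega
  have hQpos : 0 < Qv m h := by unfold Qv; positivity
  have hT4 : T m h = 4 * Qv m h := T_eq_4Q m h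
  have hLval : l h = 24 * h + 34 := rfl
  have hLpos : 0 < l h := by omega
  have hlen : ∀ jj : Fin p, 0 < (segs jj).length :=
    fun jj => List.length_pos_iff.mpr (hne jj)
  have hgmem : ∀ (jj : Fin p) (d : ℕ), d < (segs jj).length →
      (segs jj).getD d Vtx.mid ∈ segs jj := by
    intro jj d hd
    rw [List.getD_eq_getElem _ _ hd]
    exact List.getElem_mem _
  have hgnmid : ∀ (jj : Fin p) (d : ℕ), d < (segs jj).length →
      (segs jj).getD d Vtx.mid ≠ Vtx.mid := by
    intro jj d hd he
    exact hmid jj (he ▸ hgmem jj d hd)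
  obtain ⟨hstep, hvisit, hRD⟩ := hsol
  have hN2 : 2 ≤ (word segs).length := by
    have h1 : off segs 1 = off segs 0 + (1 + (segs ⟨0, hp⟩).length) := off_succF segs ⟨0, hp⟩
    have h2 := off_le_N segs 1 hp
    have h3 := hlen ⟨0, hp⟩
    rw [off_zero] at h1
    omega
  -- block positions
  have POS : ∀ jj : Fin p, ∃ B : ℕ,
      (word segs).length ≤ B ∧
      pathOf segs B = Vtx.mid ∧
      (∀ d, d < (segs jj).length → pathOf segs (B + 1 + d) = (segs jj).getD d Vtx.mid) ∧
      pathOf segs (B + 1 + (segs jj).length) = Vtx.mid ∧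
      (∃ jp : Fin p, pathOf segs (B - 1) = (segs jp).getD ((segs jp).length - 1) Vtx.mid) ∧
      (∃ jn : Fin p,
        pathOf segs (B + 1 + (segs jj).length + 1) = (segs jn).getD 0 Vtx.mid) := by
    intro jj
    have hoffj : off segs ((jj : ℕ) + 1) = off segs (jj : ℕ) + (1 + (segs jj).length) :=
      off_succF segs jj
    have hoffp : off segs p = (word segs).length := off_p segs
    refine ⟨(word segs).length + off segs (jj : ℕ), Nat.le_add_right _ _, ?_, ?_, ?_, ?_, ?_⟩
    · have hb := s_block segs 1 jj 0 (by omega)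
      simpa using hb
    · intro d hd
      have hb := s_block segs 1 jj (d + 1) (by omega)
      rw [List.getD_cons_succ] at hb
      rw [show (word segs).length + off segs (jj : ℕ) + 1 + d
          = 1 * (word segs).length + (off segs (jj : ℕ) + (d + 1)) from by ring]
      exact hb
    · by_cases hlast : (jj : ℕ) + 1 < p
      · have hb : pathOf segs
            (1 * (word segs).length + (off segs ((jj : ℕ) + 1) + 0))
            = (Vtx.mid :: segs ⟨(jj : ℕ) + 1, hlast⟩).getD 0 Vtx.mid :=
          s_block segs 1 ⟨(jj : ℕ) + 1, hlast⟩ 0 (by omega)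
        rw [show (word segs).length + off segs (jj : ℕ) + 1 + (segs jj).length
            = 1 * (word segs).length + (off segs ((jj : ℕ) + 1) + 0) from by omega]
        simpa using hb
      · have hpe : (jj : ℕ) + 1 = p := by have := jj.isLt; omega
        have hoffp2 : off segs ((jj : ℕ) + 1) = (word segs).length := by rw [hpe]; exact hoffp
        have hb : pathOf segs (2 * (word segs).length + (off segs 0 + 0))
            = (Vtx.mid :: segs ⟨0, hp⟩).getD 0 Vtx.mid :=
          s_block segs 2 ⟨0, hp⟩ 0 (by omega)
        rw [off_zero] at hb
        rw [show (word segs).length + off segs (jj : ℕ) + 1 + (segs jj).length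
            = 2 * (word segs).length + (0 + 0) from by omega]
        simpa using hb
    · -- previous segment's last element
      by_cases hj0 : (jj : ℕ) = 0
      · have hppos : p - 1 < p := by omega
        refine ⟨⟨p - 1, hppos⟩, ?_⟩
        have hoffq : off segs ((p - 1) + 1)
            = off segs (p - 1) + (1 + (segs ⟨p - 1, hppos⟩).length) :=
          off_succF segs ⟨p - 1, hppos⟩
        have hpe : (p - 1) + 1 = p := by omega
        rw [hpe] at hoffq
        have hb : pathOf segs
            (0 * (word segs).length + (off segs (p - 1) + (segs ⟨p - 1, hppos⟩).length))
            = (Vtx.mid :: segs ⟨p - 1, hppos⟩).getD ((segs ⟨p - 1, hppos⟩).length) Vtx.mid :=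
          s_block segs 0 ⟨p - 1, hppos⟩ ((segs ⟨p - 1, hppos⟩).length) (by omega)
        have hoffj0 : off segs (jj : ℕ) = 0 := by rw [hj0, off_zero]
        rw [show (word segs).length + off segs (jj : ℕ) - 1
            = 0 * (word segs).length + (off segs (p - 1) + (segs ⟨p - 1, hppos⟩).length)
            from by have := hlen ⟨p - 1, hppos⟩; omega]
        rw [hb]
        exact getD_cons_len _ _ _ (hlen _)
      · have hjpos : (jj : ℕ) - 1 < p := by have := jj.isLt; omega
        refine ⟨⟨(jj : ℕ) - 1, hjpos⟩, ?_⟩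
        have hoffq : off segs (((jj : ℕ) - 1) + 1)
            = off segs ((jj : ℕ) - 1) + (1 + (segs ⟨(jj : ℕ) - 1, hjpos⟩).length) :=
          off_succF segs ⟨(jj : ℕ) - 1, hjpos⟩
        have hpe : ((jj : ℕ) - 1) + 1 = (jj : ℕ) := by omega
        rw [hpe] at hoffq
        have hb : pathOf segs
            (1 * (word segs).length
              + (off segs ((jj : ℕ) - 1) + (segs ⟨(jj : ℕ) - 1, hjpos⟩).length))
            = (Vtx.mid :: segs ⟨(jj : ℕ) - 1, hjpos⟩).getD
                ((segs ⟨(jj : ℕ) - 1, hjpos⟩).length) Vtx.mid :=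
          s_block segs 1 ⟨(jj : ℕ) - 1, hjpos⟩ _ (by omega)
        rw [show (word segs).length + off segs (jj : ℕ) - 1
            = 1 * (word segs).length
              + (off segs ((jj : ℕ) - 1) + (segs ⟨(jj : ℕ) - 1, hjpos⟩).length)
            from by omega]
        rw [hb]
        exact getD_cons_len _ _ _ (hlen _)
    · -- next segment's first element
      by_cases hlast : (jj : ℕ) + 1 < p
      · refine ⟨⟨(jj : ℕ) + 1, hlast⟩, ?_⟩
        have hb : pathOf segs (1 * (word segs).length + (off segs ((jj : ℕ) + 1) + 1))
            = (Vtx.mid :: segs ⟨(jj : ℕ) + 1, hlast⟩).getD 1 Vtx.mid :=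
          s_block segs 1 ⟨(jj : ℕ) + 1, hlast⟩ 1 (by have := hlen ⟨(jj : ℕ) + 1, hlast⟩; omega)
        rw [show (word segs).length + off segs (jj : ℕ) + 1 + (segs jj).length + 1
            = 1 * (word segs).length + (off segs ((jj : ℕ) + 1) + 1) from by omega]
        rw [hb]
        rfl
      · have hpe : (jj : ℕ) + 1 = p := by have := jj.isLt; omega
        have hoffp2 : off segs ((jj : ℕ) + 1) = (word segs).length := by rw [hpe]; exact hoffp
        refine ⟨⟨0, hp⟩, ?_⟩
        have hb : pathOf segs (2 * (word segs).length + (off segs 0 + 1))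
            = (Vtx.mid :: segs ⟨0, hp⟩).getD 1 Vtx.mid :=
          s_block segs 2 ⟨0, hp⟩ 1 (by have := hlen ⟨0, hp⟩; omega)
        rw [off_zero] at hb
        rw [show (word segs).length + off segs (jj : ℕ) + 1 + (segs jj).length + 1
            = 2 * (word segs).length + (0 + 1) from by omega]
        rw [hb]
        rfl
  -- every segment starts and ends with top or bot
  have S1 : ∀ jj : Fin p,
      ((segs jj).getD 0 Vtx.mid = Vtx.top ∨ (segs jj).getD 0 Vtx.mid = Vtx.bot) ∧
      ((segs jj).getD ((segs jj).length - 1) Vtx.mid = Vtx.top ∨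
        (segs jj).getD ((segs jj).length - 1) Vtx.mid = Vtx.bot) := by
    intro jj
    obtain ⟨B, hNB, hBmid, hBseg, hq2mid, -, -⟩ := POS jj
    have hnomid : ∀ i, B < i → i < B + 1 + (segs jj).length → pathOf segs i ≠ Vtx.mid := by
      intro i h1 h2
      have hd : i - B - 1 < (segs jj).length := by omega
      have hv := hBseg (i - B - 1) hd
      rw [show B + 1 + (i - B - 1) = i from by omega] at hv
      rw [hv]
      exact hgnmid jj _ hd
    have hdur := hRD Vtx.mid B (B + 1 + (segs jj).length) (by omega) hBmid hq2mid hnomid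
    rw [show RD m h Vtx.mid = T m h from rfl] at hdur
    have hdd : dur (FT m h occurs) (pathOf segs) B (B + 1 + (segs jj).length)
        = ∑ i ∈ Finset.Ico B (B + 1 + (segs jj).length),
            FT m h occurs (pathOf segs i) (pathOf segs (i + 1)) := rfl
    rw [hdd] at hdur
    constructor
    · by_contra hcon
      push_neg at hcon
      obtain ⟨hc1, hc2⟩ := hcon
      have h1 : pathOf segs (B + 1) = (segs jj).getD 0 Vtx.mid := by
        have := hBseg 0 (hlen jj); simpa using this
      have hfB : FT m h occurs (pathOf segs B) (pathOf segs (B + 1)) = 2 * T m h := by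
        rw [hBmid, h1]
        exact FT_from_mid_eq occurs _ hc1 hc2 (hgnmid jj 0 (hlen jj))
      have hle : FT m h occurs (pathOf segs B) (pathOf segs (B + 1))
          ≤ ∑ i ∈ Finset.Ico B (B + 1 + (segs jj).length),
              FT m h occurs (pathOf segs i) (pathOf segs (i + 1)) :=
        sum_one (fun i => FT m h occurs (pathOf segs i) (pathOf segs (i + 1)))
          B (B + 1 + (segs jj).length) B le_rfl (by omega)
      rw [hfB] at hle
      omega
    · by_contra hcon
      push_neg at hcon
      obtain ⟨hc1, hc2⟩ := hcon
      have hd1 : (segs jj).length - 1 < (segs jj).length := by have := hlen jj; omega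
      have h1 : pathOf segs (B + 1 + ((segs jj).length - 1))
          = (segs jj).getD ((segs jj).length - 1) Vtx.mid := hBseg _ hd1
      have hq2e : B + 1 + ((segs jj).length - 1) + 1 = B + 1 + (segs jj).length := by
        have := hlen jj; omega
      have hfB : FT m h occurs (pathOf segs (B + 1 + ((segs jj).length - 1)))
          (pathOf segs (B + 1 + ((segs jj).length - 1) + 1)) = 2 * T m h := by
        rw [hq2e, h1, hq2mid]
        exact FT_to_mid_eq occurs _ hc1 hc2 (hgnmid jj _ hd1)
      have hle : FT m h occurs (pathOf segs (B + 1 + ((segs jj).length - 1)))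
          (pathOf segs (B + 1 + ((segs jj).length - 1) + 1))
          ≤ ∑ i ∈ Finset.Ico B (B + 1 + (segs jj).length),
              FT m h occurs (pathOf segs i) (pathOf segs (i + 1)) :=
        sum_one (fun i => FT m h occurs (pathOf segs i) (pathOf segs (i + 1)))
          B (B + 1 + (segs jj).length) (B + 1 + ((segs jj).length - 1)) (by omega) (by omega)
      rw [hfB] at hle
      omega
  -- the consecutive-occurrence gap around a segment avoiding u
  have GAP : ∀ (u : Vtx m h) (jj : Fin p), u ≠ Vtx.mid → u ∉ segs jj →
      ∃ (B a b : ℕ) (jp jn : Fin p),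
        (word segs).length ≤ B ∧
        pathOf segs B = Vtx.mid ∧
        (∀ d, d < (segs jj).length → pathOf segs (B + 1 + d) = (segs jj).getD d Vtx.mid) ∧
        pathOf segs (B + 1 + (segs jj).length) = Vtx.mid ∧
        pathOf segs (B - 1) = (segs jp).getD ((segs jp).length - 1) Vtx.mid ∧
        pathOf segs (B + 1 + (segs jj).length + 1) = (segs jn).getD 0 Vtx.mid ∧
        a ≤ B - 1 ∧ pathOf segs a = u ∧
        B + 1 + (segs jj).length + 1 ≤ b ∧ pathOf segs b = u ∧
        (pathOf segs (B - 1) ≠ u → a ≤ B - 2) ∧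
        (pathOf segs (B + 1 + (segs jj).length + 1) ≠ u →
          B + 1 + (segs jj).length + 2 ≤ b) ∧
        dur (FT m h occurs) (pathOf segs) a b ≤ RD m h u := by
    intro u jj humid hunotin
    obtain ⟨B, hNB, hBmid, hBseg, hq2mid, ⟨jp, hprev⟩, ⟨jn, hnext⟩⟩ := POS jj
    obtain ⟨n0, -, hn0⟩ := hvisit u 0
    have hw : pathOf segs (n0 % (word segs).length) = u := by rw [s_mod]; exact hn0
    have hwle : n0 % (word segs).length ≤ B - 1 := by
      have := Nat.mod_lt n0 (show 0 < (word segs).length by omega)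
      omega
    set a := Nat.findGreatest (fun n => pathOf segs n = u) (B - 1) with ha_def
    have ha : pathOf segs a = u := by rw [ha_def]; exact Nat.findGreatest_spec (P := fun n => pathOf segs n = u) hwle hw
    have ha_le : a ≤ B - 1 := by rw [ha_def]; exact Nat.findGreatest_le _
    obtain ⟨n1, hn1ge, hn1⟩ := hvisit u (B + 1 + (segs jj).length + 1)
    have hex : ∃ dd, pathOf segs (B + 1 + (segs jj).length + 1 + dd) = u :=
      ⟨n1 - (B + 1 + (segs jj).length + 1), by
        rw [show B + 1 + (segs jj).length + 1 + (n1 - (B + 1 + (segs jj).length + 1)) = n1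
          from by omega]
        exact hn1⟩
    set b := B + 1 + (segs jj).length + 1 + Nat.find hex with hb_def
    have hb : pathOf segs b = u := by rw [hb_def]; exact Nat.find_spec hex
    have hb_ge : B + 1 + (segs jj).length + 1 ≤ b := by omega
    have hseg_ne : ∀ i, B < i → i < B + 1 + (segs jj).length → pathOf segs i ≠ u := by
      intro i h1 h2 he
      have hd : i - B - 1 < (segs jj).length := by omega
      have hv := hBseg (i - B - 1) hd
      rw [show B + 1 + (i - B - 1) = i from by omega] at hv
      exact hunotin (by rw [← he, hv]; exact hgmem jj _ hd)
    have hbetween : ∀ i, a < i → i < b → pathOf segs i ≠ u := by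
      intro i h1 h2
      rcases lt_trichotomy i B with hc | hc | hc
      · exact Nat.findGreatest_is_greatest (P := fun n => pathOf segs n = u) (ha_def ▸ h1) (by omega)
      · rw [hc, hBmid]; exact Ne.symm humid
      · rcases lt_trichotomy i (B + 1 + (segs jj).length) with hc3 | hc3 | hc3
        · exact hseg_ne i hc hc3
        · rw [hc3, hq2mid]; exact Ne.symm humid
        · intro he
          have hd2 : i - (B + 1 + (segs jj).length + 1) < Nat.find hex := by omega
          exact Nat.find_min hex hd2 (by
            rw [show B + 1 + (segs jj).length + 1 + (i - (B + 1 + (segs jj).length + 1)) = i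
              from by omega]
            exact he)
    refine ⟨B, a, b, jp, jn, hNB, hBmid, hBseg, hq2mid, hprev, hnext, ha_le, ha, hb_ge, hb,
      ?_, ?_, ?_⟩
    · intro hne1
      have : a ≠ B - 1 := fun e => hne1 (by rw [← e]; exact ha)
      omega
    · intro hne2
      have hfind : Nat.find hex ≠ 0 := by
        intro h0
        have hsp := Nat.find_spec hex
        rw [h0, Nat.add_zero] at hsp
        exact hne2 hsp
      omega
    · exact hRD u a b (by omega) ha hb hbetween
  -- every segment contains every shared vertex
  have S2 : ∀ (jj : Fin p) (k : Fin (2 * m - 1)), Vtx.shared k ∈ segs jj := by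
    intro jj k
    by_contra hcon
    obtain ⟨B, a, b, jp, jn, hNB, hBmid, hBseg, hq2mid, hprev, hnext, ha_le, ha, hb_ge, hb,
      hale2, hbge2, hdur⟩ := GAP (Vtx.shared k) jj (by simp) hcon
    have hprevV : pathOf segs (B - 1) = Vtx.top ∨ pathOf segs (B - 1) = Vtx.bot := by
      rw [hprev]; exact (S1 jp).2
    have hnextV : pathOf segs (B + 1 + (segs jj).length + 1) = Vtx.top ∨
        pathOf segs (B + 1 + (segs jj).length + 1) = Vtx.bot := by
      rw [hnext]; exact (S1 jn).1
    have ha2 : a ≤ B - 2 := hale2 (by rcases hprevV with e | e <;> rw [e] <;> simp)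
    have hb2 : B + 1 + (segs jj).length + 2 ≤ b :=
      hbge2 (by rcases hnextV with e | e <;> rw [e] <;> simp)
    have hspPrev : isSpecial (pathOf segs (B - 1)) = true := by
      rcases hprevV with e | e <;> rw [e] <;> rfl
    have hspNext : isSpecial (pathOf segs (B + 1 + (segs jj).length + 1)) = true := by
      rcases hnextV with e | e <;> rw [e] <;> rfl
    have hf1 : (3 * m + 1) * l h
        ≤ FT m h occurs (pathOf segs (B - 2)) (pathOf segs (B - 2 + 1)) := by
      rw [show B - 2 + 1 = B - 1 from by omega]
      exact FT_sp_right occurs hm' _ _ hspPrev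
        (by have := hstep (B - 2); rwa [show B - 2 + 1 = B - 1 from by omega] at this)
    have hf2 : Qv m h ≤ FT m h occurs (pathOf segs (B - 1)) (pathOf segs (B - 1 + 1)) := by
      rw [show B - 1 + 1 = B from by omega, hBmid]
      exact FT_to_mid occurs hm' _ (by rcases hprevV with e | e <;> rw [e] <;> simp)
    have hf3 : Qv m h ≤ FT m h occurs (pathOf segs B) (pathOf segs (B + 1)) := by
      have h1 : pathOf segs (B + 1) = (segs jj).getD 0 Vtx.mid := by
        have := hBseg 0 (hlen jj); simpa using this
      rw [hBmid]
      exact FT_from_mid occurs hm' _ (by rw [h1]; exact hgnmid jj 0 (hlen jj))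
    have hf4 : Qv m h ≤ FT m h occurs (pathOf segs (B + 1 + ((segs jj).length - 1)))
        (pathOf segs (B + 1 + ((segs jj).length - 1) + 1)) := by
      rw [show B + 1 + ((segs jj).length - 1) + 1 = B + 1 + (segs jj).length
        from by have := hlen jj; omega, hq2mid]
      have hv := hBseg ((segs jj).length - 1) (by have := hlen jj; omega)
      exact FT_to_mid occurs hm' _
        (by rw [hv]; exact hgnmid jj _ (by have := hlen jj; omega))
    have hf5 : Qv m h ≤ FT m h occurs (pathOf segs (B + 1 + (segs jj).length))
        (pathOf segs (B + 1 + (segs jj).length + 1)) := by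
      rw [hq2mid]
      exact FT_from_mid occurs hm' _ (by rw [hnext]; exact hgnmid jn 0 (hlen jn))
    have hf6 : (3 * m + 1) * l h
        ≤ FT m h occurs (pathOf segs (B + 1 + (segs jj).length + 1))
            (pathOf segs (B + 1 + (segs jj).length + 1 + 1)) :=
      FT_sp_left occurs hm' _ _ hspNext (hstep _)
    have hsum : FT m h occurs (pathOf segs (B - 2)) (pathOf segs (B - 2 + 1))
        + FT m h occurs (pathOf segs (B - 1)) (pathOf segs (B - 1 + 1))
        + FT m h occurs (pathOf segs B) (pathOf segs (B + 1))
        + FT m h occurs (pathOf segs (B + 1 + ((segs jj).length - 1)))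
            (pathOf segs (B + 1 + ((segs jj).length - 1) + 1))
        + FT m h occurs (pathOf segs (B + 1 + (segs jj).length))
            (pathOf segs (B + 1 + (segs jj).length + 1))
        + FT m h occurs (pathOf segs (B + 1 + (segs jj).length + 1))
            (pathOf segs (B + 1 + (segs jj).length + 1 + 1))
        ≤ ∑ i ∈ Finset.Ico a b, FT m h occurs (pathOf segs i) (pathOf segs (i + 1)) :=
      sum_six (fun i => FT m h occurs (pathOf segs i) (pathOf segs (i + 1))) a b
        (B - 2) (B - 1) B (B + 1 + ((segs jj).length - 1)) (B + 1 + (segs jj).length)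
        (B + 1 + (segs jj).length + 1)
        (by omega) (by omega) (by omega) (by have := hlen jj; omega)
        (by have := hlen jj; omega) (by omega) (by omega)
    have hdd : dur (FT m h occurs) (pathOf segs) a b
        = ∑ i ∈ Finset.Ico a b, FT m h occurs (pathOf segs i) (pathOf segs (i + 1)) := rfl
    rw [hdd, show RD m h (Vtx.shared k) = T m h + 2 * h from rfl] at hdur
    have hX : l h ≤ (3 * m + 1) * l h := Nat.le_mul_of_pos_left _ (by omega)
    linarith
  -- every segment contains top and bot
  have S3 : ∀ (u : Vtx m h) (jj : Fin p), u ≠ Vtx.mid → RD m h u = T m h → u ∈ segs jj := by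
    intro u jj humid hRDu
    by_contra hcon
    obtain ⟨B, a, b, jp, jn, hNB, hBmid, hBseg, hq2mid, hprev, hnext, ha_le, ha, hb_ge, hb,
      hale2, hbge2, hdur⟩ := GAP u jj humid hcon
    have hk0 : (0 : ℕ) < 2 * m - 1 := by omega
    have hsh := S2 jj ⟨0, hk0⟩
    have hidxlt : (segs jj).idxOf (Vtx.shared ⟨0, hk0⟩) < (segs jj).length :=
      List.idxOf_lt_length_iff.mpr hsh
    set d0 := (segs jj).idxOf (Vtx.shared ⟨0, hk0⟩) with hd0_def
    have hgl : (segs jj).getD d0 Vtx.mid = Vtx.shared ⟨0, hk0⟩ := by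
      rw [hd0_def, List.getD_eq_getElem _ _ hidxlt]
      exact List.getElem_idxOf hidxlt
    have hne0 : d0 ≠ 0 := by
      intro h0
      rw [h0] at hgl
      rcases (S1 jj).1 with e | e <;> rw [e] at hgl <;> exact absurd hgl (by simp)
    have hne1 : d0 ≠ (segs jj).length - 1 := by
      intro h0
      rw [h0] at hgl
      rcases (S1 jj).2 with e | e <;> rw [e] at hgl <;> exact absurd hgl (by simp)
    have hd0lo : 1 ≤ d0 := by omega
    have hd0hi : d0 ≤ (segs jj).length - 2 := by omega
    have hlen3 : 3 ≤ (segs jj).length := by have := hlen jj; omega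
    have hveq : pathOf segs (B + 1 + d0) = Vtx.shared ⟨0, hk0⟩ := by
      rw [hBseg d0 hidxlt]; exact hgl
    have hprevV : pathOf segs (B - 1) = Vtx.top ∨ pathOf segs (B - 1) = Vtx.bot := by
      rw [hprev]; exact (S1 jp).2
    have hf1 : Qv m h ≤ FT m h occurs (pathOf segs (B - 1)) (pathOf segs (B - 1 + 1)) := by
      rw [show B - 1 + 1 = B from by omega, hBmid]
      exact FT_to_mid occurs hm' _ (by rcases hprevV with e | e <;> rw [e] <;> simp)
    have hf2 : Qv m h ≤ FT m h occurs (pathOf segs B) (pathOf segs (B + 1)) := by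
      have h1 : pathOf segs (B + 1) = (segs jj).getD 0 Vtx.mid := by
        have := hBseg 0 (hlen jj); simpa using this
      rw [hBmid]
      exact FT_from_mid occurs hm' _ (by rw [h1]; exact hgnmid jj 0 (hlen jj))
    have hf3 : (3 * m + 1) * l h
        ≤ FT m h occurs (pathOf segs (B + d0)) (pathOf segs (B + d0 + 1)) := by
      rw [show B + d0 + 1 = B + 1 + d0 from by omega]
      refine FT_sp_right occurs hm' _ _ (by rw [hveq]; rfl) ?_
      have := hstep (B + d0)
      rwa [show B + d0 + 1 = B + 1 + d0 from by omega] at this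
    have hf4 : (3 * m + 1) * l h
        ≤ FT m h occurs (pathOf segs (B + 1 + d0)) (pathOf segs (B + 1 + d0 + 1)) :=
      FT_sp_left occurs hm' _ _ (by rw [hveq]; rfl) (hstep _)
    have hf5 : Qv m h ≤ FT m h occurs (pathOf segs (B + 1 + ((segs jj).length - 1)))
        (pathOf segs (B + 1 + ((segs jj).length - 1) + 1)) := by
      rw [show B + 1 + ((segs jj).length - 1) + 1 = B + 1 + (segs jj).length
        from by omega, hq2mid]
      have hv := hBseg ((segs jj).length - 1) (by omega)
      exact FT_to_mid occurs hm' _ (by rw [hv]; exact hgnmid jj _ (by omega))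
    have hf6 : Qv m h ≤ FT m h occurs (pathOf segs (B + 1 + (segs jj).length))
        (pathOf segs (B + 1 + (segs jj).length + 1)) := by
      rw [hq2mid]
      exact FT_from_mid occurs hm' _ (by rw [hnext]; exact hgnmid jn 0 (hlen jn))
    have hsum : FT m h occurs (pathOf segs (B - 1)) (pathOf segs (B - 1 + 1))
        + FT m h occurs (pathOf segs B) (pathOf segs (B + 1))
        + FT m h occurs (pathOf segs (B + d0)) (pathOf segs (B + d0 + 1))
        + FT m h occurs (pathOf segs (B + 1 + d0)) (pathOf segs (B + 1 + d0 + 1))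
        + FT m h occurs (pathOf segs (B + 1 + ((segs jj).length - 1)))
            (pathOf segs (B + 1 + ((segs jj).length - 1) + 1))
        + FT m h occurs (pathOf segs (B + 1 + (segs jj).length))
            (pathOf segs (B + 1 + (segs jj).length + 1))
        ≤ ∑ i ∈ Finset.Ico a b, FT m h occurs (pathOf segs i) (pathOf segs (i + 1)) :=
      sum_six (fun i => FT m h occurs (pathOf segs i) (pathOf segs (i + 1))) a b
        (B - 1) B (B + d0) (B + 1 + d0) (B + 1 + ((segs jj).length - 1))
        (B + 1 + (segs jj).length)
        (by omega) (by omega) (by omega) (by omega) (by omega) (by omega) (by omega)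
    have hdd : dur (FT m h occurs) (pathOf segs) a b
        = ∑ i ∈ Finset.Ico a b, FT m h occurs (pathOf segs i) (pathOf segs (i + 1)) := rfl
    rw [hdd, hRDu] at hdur
    have hX : 0 < (3 * m + 1) * l h := Nat.mul_pos (by omega) hLpos
    linarith
  -- every segment contains every vertex of relative deadline 3T/2
  have MAIN : ∀ (u : Vtx m h) (jj : Fin p), isSpecial u = false → u ≠ Vtx.mid →
      RD m h u = 3 * T m h / 2 → u ∈ segs jj := by
    intro u jj hspu humid hRDu
    by_contra hcon
    obtain ⟨B, a, b, jp, jn, hNB, hBmid, hBseg, hq2mid, hprev, hnext, ha_le, ha, hb_ge, hb,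
      hale2, hbge2, hdur⟩ := GAP u jj humid hcon
    have hutop : u ≠ Vtx.top := by rintro rfl; simp [isSpecial] at hspu
    have hubot : u ≠ Vtx.bot := by rintro rfl; simp [isSpecial] at hspu
    have hprevV : pathOf segs (B - 1) = Vtx.top ∨ pathOf segs (B - 1) = Vtx.bot := by
      rw [hprev]; exact (S1 jp).2
    have hnextV : pathOf segs (B + 1 + (segs jj).length + 1) = Vtx.top ∨
        pathOf segs (B + 1 + (segs jj).length + 1) = Vtx.bot := by
      rw [hnext]; exact (S1 jn).1
    have ha2 : a ≤ B - 2 := hale2 (by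
      rcases hprevV with e | e <;> rw [e] <;> first | exact Ne.symm hutop | exact Ne.symm hubot)
    have hb2 : B + 1 + (segs jj).length + 2 ≤ b := hbge2 (by
      rcases hnextV with e | e <;> rw [e] <;> first | exact Ne.symm hutop | exact Ne.symm hubot)
    have hspPrev : isSpecial (pathOf segs (B - 1)) = true := by
      rcases hprevV with e | e <;> rw [e] <;> rfl
    have hspNext : isSpecial (pathOf segs (B + 1 + (segs jj).length + 1)) = true := by
      rcases hnextV with e | e <;> rw [e] <;> rfl
    classical
    set SV : Finset (Vtx m h) :=
      insert Vtx.top (insert Vtx.bot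
        (Finset.image (fun k : Fin (2 * m - 1) => Vtx.shared k) Finset.univ)) with hSV
    have hSVmem : ∀ v ∈ SV, v ∈ segs jj := by
      intro v hv
      simp only [hSV, Finset.mem_insert, Finset.mem_image, Finset.mem_univ, true_and] at hv
      rcases hv with rfl | rfl | ⟨k, rfl⟩
      · exact S3 _ jj (by simp) rfl
      · exact S3 _ jj (by simp) rfl
      · exact S2 jj k
    have hSVsp : ∀ v ∈ SV, isSpecial v = true := by
      intro v hv
      simp only [hSV, Finset.mem_insert, Finset.mem_image, Finset.mem_univ, true_and] at hv
      rcases hv with rfl | rfl | ⟨k, rfl⟩ <;> rfl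
    have hSVcard : SV.card = 2 * m + 1 := by
      rw [hSV, Finset.card_insert_of_notMem (by simp), Finset.card_insert_of_notMem (by simp),
        Finset.card_image_of_injective _ (fun a b e => by simpa using e), Finset.card_univ,
        Fintype.card_fin]
      omega
    have hposlt : ∀ v ∈ SV, (segs jj).idxOf v < (segs jj).length :=
      fun v hv => List.idxOf_lt_length_iff.mpr (hSVmem v hv)
    have hposval : ∀ v ∈ SV, pathOf segs (B + 1 + (segs jj).idxOf v) = v := by
      intro v hv
      rw [hBseg _ (hposlt v hv), List.getD_eq_getElem _ _ (hposlt v hv)]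
      exact List.getElem_idxOf (hposlt v hv)
    set P : Finset ℕ := SV.image (fun v => B + 1 + (segs jj).idxOf v) with hP
    have hPcard : P.card = 2 * m + 1 := by
      rw [hP, Finset.card_image_of_injOn, hSVcard]
      intro v hv w hw he
      simp only at he
      have hv' : v ∈ SV := hv
      have hw' : w ∈ SV := hw
      have hei : (segs jj).idxOf v = (segs jj).idxOf w := by omega
      have h1 := List.getElem_idxOf (hposlt v hv')
      have h2 := List.getElem_idxOf (hposlt w hw')
      rw [← h1, ← h2]
      simp only [hei]
    have hPne : P.Nonempty := by
      refine ⟨B + 1 + (segs jj).idxOf Vtx.top, ?_⟩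
      rw [hP]
      exact Finset.mem_image_of_mem _ (by simp [hSV])
    have hmemP : ∀ t ∈ P, B + 1 ≤ t ∧ t ≤ B + (segs jj).length
        ∧ isSpecial (pathOf segs t) = true := by
      intro t ht
      rw [hP] at ht
      obtain ⟨v, hv, rfl⟩ := Finset.mem_image.mp ht
      have h1 := hposlt v hv
      refine ⟨by omega, by omega, ?_⟩
      rw [hposval v hv]
      exact hSVsp v hv
    set t1 := P.min' hPne with ht1
    set tl := P.max' hPne with htl
    obtain ⟨ht1lo, ht1hi, ht1sp⟩ := hmemP _ (P.min'_mem hPne)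
    obtain ⟨htllo, htlhi, htlsp⟩ := hmemP _ (P.max'_mem hPne)
    have ht1tl : t1 ≤ tl := Finset.min'_le _ _ (P.max'_mem hPne)
    have hgap : ∀ t t', isSpecial (pathOf segs t) = true → isSpecial (pathOf segs t') = true →
        t < t' → 2 * ((3 * m + 1) * l h)
          ≤ ∑ i ∈ Finset.Ico t t', FT m h occurs (pathOf segs i) (pathOf segs (i + 1)) := by
      intro t t' hspt hspt' hlt
      by_cases hc : t' = t + 1
      · have hIco : Finset.Ico t t' = {t} := by
          ext x; simp only [Finset.mem_Ico, Finset.mem_singleton, hc]; omega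
        rw [hIco, Finset.sum_singleton]
        have he : FT m h occurs (pathOf segs t) (pathOf segs (t + 1)) = 2 * T m h := by
          have hsp2 : isSpecial (pathOf segs (t + 1)) = true := by rw [← hc]; exact hspt'
          exact FT_sp_sp occurs _ _ hspt hsp2 (hstep t)
        rw [he, hT4]
        have hQge := Q_ge m h hm'
        omega
      · have hlt2 : t + 1 < t' := by omega
        have hb1 : (3 * m + 1) * l h
            ≤ FT m h occurs (pathOf segs t) (pathOf segs (t + 1)) :=
          FT_sp_left occurs hm' _ _ hspt (hstep t)
        have hb2 : (3 * m + 1) * l h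
            ≤ FT m h occurs (pathOf segs (t' - 1)) (pathOf segs (t' - 1 + 1)) := by
          rw [show t' - 1 + 1 = t' from by omega]
          refine FT_sp_right occurs hm' _ _ hspt' ?_
          have := hstep (t' - 1)
          rwa [show t' - 1 + 1 = t' from by omega] at this
        have hsum2 : FT m h occurs (pathOf segs t) (pathOf segs (t + 1))
            + FT m h occurs (pathOf segs (t' - 1)) (pathOf segs (t' - 1 + 1))
            ≤ ∑ i ∈ Finset.Ico t t', FT m h occurs (pathOf segs i) (pathOf segs (i + 1)) :=
          sum_two (fun i => FT m h occurs (pathOf segs i) (pathOf segs (i + 1))) t t'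
            t (t' - 1) le_rfl (by omega) (by omega)
        omega
    have hchain := chain_sum (fun i => FT m h occurs (pathOf segs i) (pathOf segs (i + 1)))
      (fun t => isSpecial (pathOf segs t) = true) (2 * ((3 * m + 1) * l h)) hgap
      P.card P rfl (fun t ht => (hmemP t ht).2.2) hPne
    rw [hPcard] at hchain
    simp only [Nat.add_sub_cancel] at hchain
    have hf1 : (3 * m + 1) * l h
        ≤ FT m h occurs (pathOf segs (B - 2)) (pathOf segs (B - 2 + 1)) := by
      rw [show B - 2 + 1 = B - 1 from by omega]
      exact FT_sp_right occurs hm' _ _ hspPrev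
        (by have := hstep (B - 2); rwa [show B - 2 + 1 = B - 1 from by omega] at this)
    have hf2 : Qv m h ≤ FT m h occurs (pathOf segs (B - 1)) (pathOf segs (B - 1 + 1)) := by
      rw [show B - 1 + 1 = B from by omega, hBmid]
      exact FT_to_mid occurs hm' _ (by rcases hprevV with e | e <;> rw [e] <;> simp)
    have hf3 : Qv m h ≤ FT m h occurs (pathOf segs B) (pathOf segs (B + 1)) := by
      have h1 : pathOf segs (B + 1) = (segs jj).getD 0 Vtx.mid := by
        have := hBseg 0 (hlen jj); simpa using this
      rw [hBmid]
      exact FT_from_mid occurs hm' _ (by rw [h1]; exact hgnmid jj 0 (hlen jj))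
    have hsumL : FT m h occurs (pathOf segs (B - 2)) (pathOf segs (B - 2 + 1))
        + FT m h occurs (pathOf segs (B - 1)) (pathOf segs (B - 1 + 1))
        + FT m h occurs (pathOf segs B) (pathOf segs (B + 1))
        ≤ ∑ i ∈ Finset.Ico a t1, FT m h occurs (pathOf segs i) (pathOf segs (i + 1)) :=
      sum_three (fun i => FT m h occurs (pathOf segs i) (pathOf segs (i + 1))) a t1
        (B - 2) (B - 1) B (by omega) (by omega) (by omega) (by omega)
    have hf4 : Qv m h ≤ FT m h occurs (pathOf segs (B + 1 + ((segs jj).length - 1)))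
        (pathOf segs (B + 1 + ((segs jj).length - 1) + 1)) := by
      rw [show B + 1 + ((segs jj).length - 1) + 1 = B + 1 + (segs jj).length
        from by have := hlen jj; omega, hq2mid]
      have hv := hBseg ((segs jj).length - 1) (by have := hlen jj; omega)
      exact FT_to_mid occurs hm' _
        (by rw [hv]; exact hgnmid jj _ (by have := hlen jj; omega))
    have hf5 : Qv m h ≤ FT m h occurs (pathOf segs (B + 1 + (segs jj).length))
        (pathOf segs (B + 1 + (segs jj).length + 1)) := by
      rw [hq2mid]
      exact FT_from_mid occurs hm' _ (by rw [hnext]; exact hgnmid jn 0 (hlen jn))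
    have hf6 : (3 * m + 1) * l h
        ≤ FT m h occurs (pathOf segs (B + 1 + (segs jj).length + 1))
            (pathOf segs (B + 1 + (segs jj).length + 1 + 1)) :=
      FT_sp_left occurs hm' _ _ hspNext (hstep _)
    have hsumR : FT m h occurs (pathOf segs (B + 1 + ((segs jj).length - 1)))
            (pathOf segs (B + 1 + ((segs jj).length - 1) + 1))
        + FT m h occurs (pathOf segs (B + 1 + (segs jj).length))
            (pathOf segs (B + 1 + (segs jj).length + 1))
        + FT m h occurs (pathOf segs (B + 1 + (segs jj).length + 1))
            (pathOf segs (B + 1 + (segs jj).length + 1 + 1))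
        ≤ ∑ i ∈ Finset.Ico tl b, FT m h occurs (pathOf segs i) (pathOf segs (i + 1)) :=
      sum_three (fun i => FT m h occurs (pathOf segs i) (pathOf segs (i + 1))) tl b
        (B + 1 + ((segs jj).length - 1)) (B + 1 + (segs jj).length)
        (B + 1 + (segs jj).length + 1)
        (by have := hlen jj; omega) (by have := hlen jj; omega) (by omega) (by omega)
    have hsplit1 : (∑ i ∈ Finset.Ico a t1, FT m h occurs (pathOf segs i) (pathOf segs (i + 1)))
        + ∑ i ∈ Finset.Ico t1 tl, FT m h occurs (pathOf segs i) (pathOf segs (i + 1))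
        = ∑ i ∈ Finset.Ico a tl, FT m h occurs (pathOf segs i) (pathOf segs (i + 1)) :=
      Finset.sum_Ico_consecutive _ (by omega) ht1tl
    have hsplit2 : (∑ i ∈ Finset.Ico a tl, FT m h occurs (pathOf segs i) (pathOf segs (i + 1)))
        + ∑ i ∈ Finset.Ico tl b, FT m h occurs (pathOf segs i) (pathOf segs (i + 1))
        = ∑ i ∈ Finset.Ico a b, FT m h occurs (pathOf segs i) (pathOf segs (i + 1)) :=
      Finset.sum_Ico_consecutive _ (by omega) (by omega)
    have hdd : dur (FT m h occurs) (pathOf segs) a b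
        = ∑ i ∈ Finset.Ico a b, FT m h occurs (pathOf segs i) (pathOf segs (i + 1)) := rfl
    rw [hdd, hRDu, T_32] at hdur
    have hmL : 3 * l h ≤ m * l h := Nat.mul_le_mul_right _ (by omega)
    have hQ2 : 2 * Qv m h = (12 * m ^ 2 + 8 * m) * l h + (26 * h + 34) := by unfold Qv; ring
    have hKey : 2 * m * (2 * ((3 * m + 1) * l h)) + 2 * ((3 * m + 1) * l h) + 4 * Qv m h
        ≤ 6 * Qv m h := by linarith
    have e1 : 2 * m * (2 * ((3 * m + 1) * l h)) + 2 * ((3 * m + 1) * l h)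
        = (12 * m ^ 2 + 8 * m) * l h + (2 * m + 2) * l h := by ring
    have e3 : (2 * m + 2) * l h = 2 * (m * l h) + 2 * l h := by ring
    linarith
  intro j
  exact ⟨fun k => MAIN (Vtx.clauseV k) j rfl (by simp) rfl,
    fun i r d => MAIN (Vtx.port i r d) j rfl (by simp) rfl⟩

end CRUAV
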